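/- arXiv:1602.07978 — 3 statements merged into one kernel-verified Lean document; each statement's English description precedes it below -/
import Mathlib

section
/- Let x_1, …, x_k be i.i.d. Pareto random variables with complementary CDF P(x_1 ≥ x) = x^{−α} for x ≥ 1 (and = 1 for x < 1), where kα > 1. Then k·E[min{x_1, …, x_k}] = k + k/(kα − 1) = k²α/(kα − 1). Moreover, there exists α_0 > 1 such that for all α ∈ (1, α_0) and every integer k ≥ 1 with k ≠ 2: 4α/(2α − 1) < k²α/(kα − 1); i.e., for Pareto service times with shape parameter sufficiently close to 1, the map k ↦ k·E[min{x_1,…,x_k}] attains its strict minimum at k = 2, so strict Partial-Replication yields a strictly larger stability region than both No-Replication and any other replication factor. -/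
/-!
The minimum of `k` independent Pareto(`α`) variables has survival function `s ^ (-(k α))` on
`[1, ∞)`, i.e. it is Pareto(`k α`), so the layer-cake formula gives its mean `k α / (k α - 1)`.
After clearing denominators, `4 β / (2 β - 1) < k² β / (k β - 1)` reads `β < 3 / 2` for `k = 1`
and `(k - 2) (2 β k - k - 2) > 0` for `k ≥ 3`; hence `α₀ = 3 / 2` works.
-/

open MeasureTheory ProbabilityTheory Real Set

theorem measure_le_iInf_eq_prod {Ω ι : Type*} [MeasurableSpace Ω] [Fintype ι] [Nonempty ι]
    {P : Measure Ω} {f : ι → Ω → ℝ} (hf : iIndepFun f P) (s : ℝ) :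
    P {ω | s ≤ ⨅ i, f i ω} = ∏ i, P {ω | s ≤ f i ω} := by
  have hset : {ω | s ≤ ⨅ i, f i ω} = ⋂ i, {ω | s ≤ f i ω} :=
    Set.ext fun ω => by simpa using le_ciInf_iff (Finite.bddBelow_range fun i => f i ω)
  rw [hset]
  exact hf.meas_iInter fun i => ⟨Ici s, measurableSet_Ici, rfl⟩

theorem measure_le_iInf_eq_ofReal_rpow {Ω : Type*} [MeasurableSpace Ω] {P : Measure Ω} {α : ℝ}
    {x : ℕ → Ω → ℝ} (hxlaw : ∀ i, ∀ s : ℝ, 1 ≤ s → P {ω | s ≤ x i ω} = ENNReal.ofReal (s ^ (-α)))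
    (hxindep : iIndepFun x P) (k : ℕ) [NeZero k] {s : ℝ} (hs : 1 ≤ s) :
    P {ω | s ≤ ⨅ j : Fin k, x j ω} = ENNReal.ofReal (s ^ (-(k * α))) := by
  have hs₀ : 0 ≤ s := zero_le_one.trans hs
  rw [measure_le_iInf_eq_prod (hxindep.precomp Fin.val_injective) s]
  simp only [hxlaw _ s hs, Finset.prod_const, Finset.card_univ, Fintype.card_fin]
  rw [← ENNReal.ofReal_pow (rpow_nonneg hs₀ _), ← rpow_mul_natCast hs₀]
  ring_nf

theorem integral_eq_of_pareto_tail {Ω : Type*} [MeasurableSpace Ω] {P : Measure Ω}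
    [IsProbabilityMeasure P] {Y : Ω → ℝ} {a : ℝ} (ha : 1 < a) (hY : Measurable Y)
    (hYone : ∀ ω, 1 ≤ Y ω)
    (hYlaw : ∀ s : ℝ, 1 ≤ s → P {ω | s ≤ Y ω} = ENNReal.ofReal (s ^ (-a))) :
    ∫ ω, Y ω ∂P = a / (a - 1) := by
  have ha₁ : a - 1 ≠ 0 := by linarith
  have hYnn : 0 ≤ᵐ[P] Y := Filter.Eventually.of_forall fun ω => zero_le_one.trans (hYone ω)
  have hlow : ∫⁻ t in Ioc (0 : ℝ) 1, P {ω | t ≤ Y ω} = 1 := by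
    have hfull : ∀ t ∈ Ioc (0 : ℝ) 1, P {ω | t ≤ Y ω} = 1 := fun t ht => by
      simp [fun ω => ht.2.trans (hYone ω)]
    simp [setLIntegral_congr_fun measurableSet_Ioc hfull]
  have hlt : -a < -1 := by linarith
  have htail : ∫⁻ t in Ioi (1 : ℝ), P {ω | t ≤ Y ω} = ENNReal.ofReal (1 / (a - 1)) := by
    rw [setLIntegral_congr_fun measurableSet_Ioi fun t ht => hYlaw t (le_of_lt ht),
      ← ofReal_integral_eq_lintegral_ofReal (integrableOn_Ioi_rpow_of_lt hlt one_pos)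
        ((ae_restrict_mem measurableSet_Ioi).mono fun t ht =>
          rpow_nonneg (zero_le_one.trans (le_of_lt ht)) _),
      integral_Ioi_rpow_of_lt hlt one_pos, one_rpow]
    congr 1
    have : -a + 1 ≠ 0 := by linarith
    field_simp
    ring
  rw [integral_eq_lintegral_of_nonneg_ae hYnn hY.aestronglyMeasurable,
    lintegral_eq_lintegral_meas_le P hYnn hY.aemeasurable,
    ← Ioc_union_Ioi_eq_Ioi zero_le_one,
    lintegral_union measurableSet_Ioi (Ioc_disjoint_Ioi le_rfl), hlow, htail,
    ENNReal.toReal_add ENNReal.one_ne_top ENNReal.ofReal_ne_top, ENNReal.toReal_one,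
    ENNReal.toReal_ofReal ((one_div_pos.mpr (sub_pos.mpr ha)).le)]
  field_simp
  ring

theorem four_mul_div_lt_sq_mul_div {β : ℝ} (hβ : 1 < β) (hβ' : β < 3 / 2) {k : ℕ} (hk : 1 ≤ k)
    (hk2 : k ≠ 2) : 4 * β / (2 * β - 1) < (k : ℝ) ^ 2 * β / ((k : ℝ) * β - 1) := by
  have hk1 : (1 : ℝ) ≤ k := by exact_mod_cast hk
  rw [div_lt_div_iff₀ (by linarith) (by nlinarith)]
  rcases (by omega : k = 1 ∨ 3 ≤ k) with rfl | hk3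
  · push_cast
    nlinarith
  · have hk3 : (3 : ℝ) ≤ k := by exact_mod_cast hk3
    nlinarith [mul_pos (by linarith : (0:ℝ) < k - 2) (by nlinarith : (0:ℝ) < 2 * β * k - k - 2)]

theorem pareto_partial_replication_best_general
    {Ω : Type*} [MeasurableSpace Ω] (P : Measure Ω) [IsProbabilityMeasure P]
    (α : ℝ)
    (x : ℕ → Ω → ℝ)
    (hxmeas : ∀ i, Measurable (x i))
    (hxone : ∀ i ω, 1 ≤ x i ω)
    (hxlaw : ∀ i, ∀ s : ℝ, 1 ≤ s →
      P {ω | s ≤ x i ω} = ENNReal.ofReal (s ^ (-α)))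
    (hxindep : iIndepFun x P) :
    (∀ k : ℕ, 1 ≤ k → 1 < (k : ℝ) * α →
        (k : ℝ) * ∫ ω, (⨅ j : Fin k, x (j : ℕ) ω) ∂P =
            (k : ℝ) + (k : ℝ) / ((k : ℝ) * α - 1) ∧
          (k : ℝ) * ∫ ω, (⨅ j : Fin k, x (j : ℕ) ω) ∂P =
            (k : ℝ) ^ 2 * α / ((k : ℝ) * α - 1)) ∧
      (∃ α₀ : ℝ, 1 < α₀ ∧ ∀ β : ℝ, 1 < β → β < α₀ →
        ∀ k : ℕ, 1 ≤ k → k ≠ 2 →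
          4 * β / (2 * β - 1) < (k : ℝ) ^ 2 * β / ((k : ℝ) * β - 1)) := by
  refine ⟨fun k hk hkα => ?_, ⟨3 / 2, by norm_num, fun β hβ hβ' k hk hk2 =>
    four_mul_div_lt_sq_mul_div hβ hβ' hk hk2⟩⟩
  have : NeZero k := ⟨by omega⟩
  have hmean : ∫ ω, (⨅ j : Fin k, x j ω) ∂P = k * α / (k * α - 1) :=
    integral_eq_of_pareto_tail hkα (Measurable.iInf fun j => hxmeas j)
      (fun ω => le_ciInf fun j => hxone j ω)
      (fun s hs => measure_le_iInf_eq_ofReal_rpow hxlaw hxindep k hs)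
  have hne : (k : ℝ) * α - 1 ≠ 0 := by linarith
  rw [hmean]
  constructor <;> field_simp
  ring

/-- **Pareto service times: strict Partial-Replication can be best.**
Let `x 0, x 1, …` be i.i.d. Pareto random variables with survival function
`P(x i ≥ s) = s^(−α)` for `s ≥ 1` (and `x i ≥ 1` a.s.).  Then, whenever
`k * α > 1`, `k * E[min {x 0, …, x (k−1)}] = k + k/(k*α − 1) = k²α/(k*α − 1)`.
Moreover there is `α₀ > 1` such that for every shape parameter `β ∈ (1, α₀)`
the map `k ↦ k²β/(k*β − 1)` attains its strict minimum at `k = 2`: strict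
partial replication with factor `2` yields a strictly larger stability region
than no replication and than any other replication factor. -/
theorem pareto_partial_replication_best
    {Ω : Type*} [MeasurableSpace Ω] (P : Measure Ω) [IsProbabilityMeasure P]
    (α : ℝ) (hα : 0 < α)
    (x : ℕ → Ω → ℝ)
    (hxmeas : ∀ i, Measurable (x i))
    (hxone : ∀ i ω, 1 ≤ x i ω)
    (hxlaw : ∀ i, ∀ s : ℝ, 1 ≤ s →
      P {ω | s ≤ x i ω} = ENNReal.ofReal (s ^ (-α)))
    (hxindep : iIndepFun x P) :
    (∀ k : ℕ, 1 ≤ k → 1 < (k : ℝ) * α →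
        (k : ℝ) * ∫ ω, (⨅ j : Fin k, x (j : ℕ) ω) ∂P =
            (k : ℝ) + (k : ℝ) / ((k : ℝ) * α - 1) ∧
          (k : ℝ) * ∫ ω, (⨅ j : Fin k, x (j : ℕ) ω) ∂P =
            (k : ℝ) ^ 2 * α / ((k : ℝ) * α - 1)) ∧
      (∃ α₀ : ℝ, 1 < α₀ ∧ ∀ β : ℝ, 1 < β → β < α₀ →
        ∀ k : ℕ, 1 ≤ k → k ≠ 2 →
          4 * β / (2 * β - 1) < (k : ℝ) ^ 2 * β / ((k : ℝ) * β - 1)) :=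
  pareto_partial_replication_best_general P α x hxmeas hxone hxlaw hxindep
end

section
/- Let α > 1, let x_1, …, x_k be i.i.d. Pareto random variables with complementary CDF P(x_1 ≥ x) = x^{−α} for x ≥ 1, and let y ≥ 0 be an integrable nonnegative random variable (independent of the x_j). Then for every integer k ≥ 1 with kα > 1: k·E[min{y + x_1, …, y + x_k}] = k·( E[y] + kα/(kα − 1) ). Moreover, if E[y] is sufficiently large (e.g., E[y] ≥ α/(α − 1)), then for every k ≥ 2: E[y] + α/(α − 1) < k·( E[y] + kα/(kα − 1) ); i.e., under this additive correlation of replica service times, No-Replication (k = 1) minimizes k·E[min] and the non-monotonic behavior in k disappears. -/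
/-!
Since the common component `y` shifts every replica by the same amount,
`min_j (y + x_j) = y + min_j x_j`, so `E[min] = E[y] + E[min_j x_j]` by linearity.
The minimum of `k` independent Pareto(`α`) variables is Pareto(`kα`), because survival
functions multiply, and a Pareto(`β`) variable has mean `β / (β - 1)` by the layer-cake
formula. For the comparison, `k (E[y] + c) > 2 E[y] ≥ E[y] + α / (α - 1)` once `k ≥ 2`.
-/

open MeasureTheory ProbabilityTheory Real Set

def HasParetoTail {Ω : Type*} [MeasurableSpace Ω] (P : Measure Ω) (f : Ω → ℝ) (β : ℝ) : Prop :=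
  ∀ s : ℝ, 1 ≤ s → P {ω | s ≤ f ω} = ENNReal.ofReal (s ^ (-β))

lemma lintegral_Ioi_one_rpow_neg {β : ℝ} (hβ : 1 < β) :
    ∫⁻ t in Ioi (1 : ℝ), ENNReal.ofReal (t ^ (-β)) = ENNReal.ofReal (1 / (β - 1)) := by
  rw [← ofReal_integral_eq_lintegral_ofReal
    (integrableOn_Ioi_rpow_of_lt (by linarith) one_pos)]
  · rw [integral_Ioi_rpow_of_lt (by linarith) one_pos, one_rpow]
    congr 1
    rw [neg_div, ← div_neg, neg_add', neg_neg]
  · filter_upwards [ae_restrict_mem measurableSet_Ioi] with t ht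
    exact rpow_nonneg (zero_le_one.trans ht.le) _

namespace HasParetoTail

variable {Ω : Type*} [MeasurableSpace Ω] {P : Measure Ω} {f : Ω → ℝ} {β : ℝ}

lemma lintegral_ofReal_eq [IsProbabilityMeasure P] (hf : HasParetoTail P f β)
    (hmeas : Measurable f) (hone : ∀ ω, 1 ≤ f ω) (hβ : 1 < β) :
    ∫⁻ ω, ENNReal.ofReal (f ω) ∂P = ENNReal.ofReal (β / (β - 1)) := by
  have hnn : 0 ≤ᵐ[P] f := Filter.Eventually.of_forall fun ω => zero_le_one.trans (hone ω)
  have below_one : ∫⁻ t in Ioc (0 : ℝ) 1, P {ω | t ≤ f ω} = 1 := by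
    rw [setLIntegral_congr_fun measurableSet_Ioc (g := fun _ => 1) fun t ht => by
      simp [fun ω => ht.2.trans (hone ω)]]
    simp
  have above_one : ∫⁻ t in Ioi (1 : ℝ), P {ω | t ≤ f ω} = ENNReal.ofReal (1 / (β - 1)) := by
    rw [setLIntegral_congr_fun measurableSet_Ioi fun t ht => hf t ht.le]
    exact lintegral_Ioi_one_rpow_neg hβ
  have hβ1 : 0 < β - 1 := by linarith
  rw [lintegral_eq_lintegral_meas_le P hnn hmeas.aemeasurable,
    ← Ioc_union_Ioi_eq_Ioi zero_le_one, lintegral_union measurableSet_Ioi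
    (Ioc_disjoint_Ioi le_rfl), below_one, above_one, ← ENNReal.ofReal_one,
    ← ENNReal.ofReal_add zero_le_one (by positivity)]
  congr 1
  field_simp
  ring

lemma integrable [IsProbabilityMeasure P] (hf : HasParetoTail P f β) (hmeas : Measurable f)
    (hone : ∀ ω, 1 ≤ f ω) (hβ : 1 < β) : Integrable f P :=
  (lintegral_ofReal_ne_top_iff_integrable hmeas.aestronglyMeasurable
    (Filter.Eventually.of_forall fun ω => zero_le_one.trans (hone ω))).mp
    (hf.lintegral_ofReal_eq hmeas hone hβ ▸ ENNReal.ofReal_ne_top)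

lemma integral_eq [IsProbabilityMeasure P] (hf : HasParetoTail P f β) (hmeas : Measurable f)
    (hone : ∀ ω, 1 ≤ f ω) (hβ : 1 < β) : ∫ ω, f ω ∂P = β / (β - 1) := by
  have hβ1 : 0 < β - 1 := by linarith
  rw [integral_eq_lintegral_of_nonneg_ae
    (Filter.Eventually.of_forall fun ω => zero_le_one.trans (hone ω))
    hmeas.aestronglyMeasurable, hf.lintegral_ofReal_eq hmeas hone hβ,
    ENNReal.toReal_ofReal (by positivity)]

lemma iInf {ι : Type*} [Fintype ι] [Nonempty ι] {x : ι → Ω → ℝ} {α : ℝ}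
    (hindep : iIndepFun x P) (hx : ∀ i, HasParetoTail P (x i) α) :
    HasParetoTail P (fun ω => ⨅ i, x i ω) (Fintype.card ι * α) := by
  intro s hs
  have hinter : {ω | s ≤ ⨅ i, x i ω} = ⋂ i, x i ⁻¹' Ici s := by
    ext ω
    simp [le_ciInf_iff (finite_range fun i => x i ω).bddBelow]
  rw [hinter, hindep.meas_iInter fun i => ⟨Ici s, measurableSet_Ici, rfl⟩]
  simp only [preimage, mem_Ici]
  rw [Finset.prod_congr rfl fun i _ => hx i s hs, Finset.prod_const, Finset.card_univ,
    ← ENNReal.ofReal_pow (rpow_nonneg (zero_le_one.trans hs) _),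
    ← rpow_natCast, ← rpow_mul (zero_le_one.trans hs), neg_mul, mul_comm]

end HasParetoTail

lemma add_lt_mul_add_of_le_of_two_le {a b c k : ℝ} (hb : 0 < b) (hba : b ≤ a) (hc : 0 < c)
    (hk : 2 ≤ k) : a + b < k * (a + c) := by
  nlinarith

theorem correlated_pareto_no_replication_best_general
    {Ω : Type*} [MeasurableSpace Ω] (P : Measure Ω) [IsProbabilityMeasure P]
    (α : ℝ) (hα : 1 < α)
    (x : ℕ → Ω → ℝ) (y : Ω → ℝ)
    (hxmeas : ∀ i, Measurable (x i))
    (hxone : ∀ i ω, 1 ≤ x i ω)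
    (hyint : Integrable y P)
    (hxlaw : ∀ i, ∀ s : ℝ, 1 ≤ s →
      P {ω | s ≤ x i ω} = ENNReal.ofReal (s ^ (-α)))
    (hxindep : iIndepFun x P) :
    (∀ k : ℕ, 1 ≤ k → 1 < (k : ℝ) * α →
        (k : ℝ) * ∫ ω, (⨅ j : Fin k, (y ω + x (j : ℕ) ω)) ∂P =
          (k : ℝ) * ((∫ ω, y ω ∂P) + (k : ℝ) * α / ((k : ℝ) * α - 1))) ∧
      (α / (α - 1) ≤ ∫ ω, y ω ∂P → ∀ k : ℕ, 2 ≤ k →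
        (∫ ω, y ω ∂P) + α / (α - 1) <
          (k : ℝ) * ((∫ ω, y ω ∂P) + (k : ℝ) * α / ((k : ℝ) * α - 1))) := by
  refine ⟨fun k hk hkα => ?_, fun hy k hk => ?_⟩
  · have : Nonempty (Fin k) := Fin.pos_iff_nonempty.mp hk
    have hmin : HasParetoTail P (fun ω => ⨅ j : Fin k, x j ω) (k * α) := by
      simpa using HasParetoTail.iInf (hxindep.precomp Fin.val_injective) fun j => hxlaw j
    have hmeas : Measurable fun ω => ⨅ j : Fin k, x j ω := .iInf fun j => hxmeas j
    have hone : ∀ ω, 1 ≤ ⨅ j : Fin k, x j ω := fun ω => le_ciInf fun j => hxone j ω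
    have hshift : ∀ ω, ⨅ j : Fin k, (y ω + x j ω) = y ω + ⨅ j : Fin k, x j ω := fun ω =>
      (add_ciInf (finite_range _).bddBelow _).symm
    simp_rw [hshift]
    rw [integral_add hyint (hmin.integrable hmeas hone hkα), hmin.integral_eq hmeas hone hkα]
  · have hα1 : 0 < α - 1 := by linarith
    have hden : 0 < (k : ℝ) * α - 1 := by
      nlinarith [show (2 : ℝ) ≤ k by exact_mod_cast hk]
    exact add_lt_mul_add_of_le_of_two_le (by positivity) hy (by positivity)
      (by exact_mod_cast hk)

/-- **Correlated Pareto replicas: No-Replication is best.**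
Let `x 0, x 1, …` be i.i.d. Pareto random variables with survival function
`P(x i ≥ s) = s^(−α)` for `s ≥ 1` (shape `α > 1`), and let `y ≥ 0` be an
integrable random variable independent of the `x i` (the common additive
component of the correlated replica service times `y + x j`).  Then for every
`k ≥ 1` with `k * α > 1`:
`k * E[min {y + x 0, …, y + x (k−1)}] = k * (E[y] + k*α/(k*α − 1))`.
Moreover, if `E[y] ≥ α/(α−1)`, then for every `k ≥ 2`
`E[y] + α/(α−1) < k * (E[y] + k*α/(k*α − 1))`: No-Replication (`k = 1`)
minimizes `k * E[min]`, so the non-monotonic behavior in `k` disappears. -/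
theorem correlated_pareto_no_replication_best
    {Ω : Type*} [MeasurableSpace Ω] (P : Measure Ω) [IsProbabilityMeasure P]
    (α : ℝ) (hα : 1 < α)
    (x : ℕ → Ω → ℝ) (y : Ω → ℝ)
    (hxmeas : ∀ i, Measurable (x i)) (hymeas : Measurable y)
    (hxone : ∀ i ω, 1 ≤ x i ω)
    (hynn : ∀ ω, 0 ≤ y ω) (hyint : Integrable y P)
    (hxlaw : ∀ i, ∀ s : ℝ, 1 ≤ s →
      P {ω | s ≤ x i ω} = ENNReal.ofReal (s ^ (-α)))
    (hxindep : iIndepFun x P)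
    (hyx : IndepFun y (fun ω => fun i : ℕ => x i ω) P) :
    (∀ k : ℕ, 1 ≤ k → 1 < (k : ℝ) * α →
        (k : ℝ) * ∫ ω, (⨅ j : Fin k, (y ω + x (j : ℕ) ω)) ∂P =
          (k : ℝ) * ((∫ ω, y ω ∂P) + (k : ℝ) * α / ((k : ℝ) * α - 1))) ∧
      (α / (α - 1) ≤ ∫ ω, y ω ∂P → ∀ k : ℕ, 2 ≤ k →
        (∫ ω, y ω ∂P) + α / (α - 1) <
          (k : ℝ) * ((∫ ω, y ω ∂P) + (k : ℝ) * α / ((k : ℝ) * α - 1))) :=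
  correlated_pareto_no_replication_best_general P α hα x y hxmeas hxone hyint hxlaw hxindep
end

section
/- Let x and y be independent exponential random variables with rate μ > 0, and let Δ ≥ 0. Then: (i) E[min{x, Δ + y}] = 1/μ − e^{−μΔ}/(2μ); (ii) E[min{(x − Δ)⁺, y}·1_{x > Δ}] = e^{−μΔ}/(2μ); and hence (iii) for any arrival rate λ > 0, the total resource usage u = λ·E[min{x, Δ+y}] + λ·E[min{(x−Δ)⁺, y}·1_{x>Δ}] equals λ/μ, independently of the replication offset Δ. -/
/-!
For `y ≥ 0` the busy time of the first server splits as
`min x (Δ + y) = min x Δ + 1_{x > Δ} · min (x - Δ) y`, the second summand being exactly the busy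
time of the second server; hence `u = λ (E[min x Δ] + 2 E[1_{x > Δ} · min (x - Δ) y])`.
Both expectations come from the tail formula `E f = ∫₀^∞ P(f > t) dt`: `min x Δ` exceeds `t < Δ`
with probability `e^{-μt}`, and by independence that busy time exceeds `t` with probability
`e^{-μ(Δ + t)} e^{-μt}`. This gives `(1 - e^{-μΔ})/μ` and `e^{-μΔ}/(2μ)`, which add up to `1/μ`.
-/

open MeasureTheory ProbabilityTheory Real Set

lemma min_add_eq_min_add_ite {x y Δ : ℝ} (hy : 0 ≤ y) :
    min x (Δ + y) = min x Δ + if Δ < x then min (x - Δ) y else 0 := by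
  split_ifs with h
  · rw [min_eq_right h.le, ← min_add_add_left, add_sub_cancel]
  · rw [min_eq_left (by linarith [not_lt.1 h]), min_eq_left (not_lt.1 h), add_zero]

lemma integral_exp_neg_mul {μ : ℝ} (hμ : μ ≠ 0) (a b : ℝ) :
    ∫ t in a..b, exp (-(μ * t)) = (exp (-(μ * a)) - exp (-(μ * b))) / μ := by
  simp only [← neg_mul]
  rw [intervalIntegral.integral_comp_mul_left (fun t => exp t) (neg_ne_zero.2 hμ), integral_exp,
    smul_eq_mul]
  ring

namespace MeasureTheory

theorem integrable_and_integral_eq_of_measure_lt {α : Type*} [MeasurableSpace α]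
    {ν : Measure α} {f : α → ℝ} (hf : AEMeasurable f ν) (hf_nn : 0 ≤ᵐ[ν] f) {g : ℝ → ℝ}
    (hg : IntegrableOn g (Ioi 0)) (hg_nn : ∀ t ∈ Ioi (0 : ℝ), 0 ≤ g t)
    (h : ∀ t ∈ Ioi (0 : ℝ), ν {a | t < f a} = ENNReal.ofReal (g t)) :
    Integrable f ν ∧ ∫ a, f a ∂ν = ∫ t in Ioi 0, g t := by
  have hlintegral : ∫⁻ a, ENNReal.ofReal (f a) ∂ν = ENNReal.ofReal (∫ t in Ioi 0, g t) := by
    rw [lintegral_eq_lintegral_meas_lt ν hf_nn hf, setLIntegral_congr_fun measurableSet_Ioi h,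
      ofReal_integral_eq_lintegral_ofReal hg
        ((ae_restrict_iff' measurableSet_Ioi).2 (ae_of_all _ hg_nn))]
  refine ⟨(lintegral_ofReal_ne_top_iff_integrable hf.aestronglyMeasurable hf_nn).1
    (hlintegral ▸ ENNReal.ofReal_ne_top), ?_⟩
  rw [integral_eq_lintegral_of_nonneg_ae hf_nn hf.aestronglyMeasurable, hlintegral,
    ENNReal.toReal_ofReal (setIntegral_nonneg measurableSet_Ioi hg_nn)]

end MeasureTheory

namespace ProbabilityTheory

lemma expMeasure_Ioi {μ s : ℝ} (hμ : 0 < μ) (hs : 0 ≤ s) :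
    expMeasure μ (Ioi s) = ENNReal.ofReal (exp (-(μ * s))) := by
  have := isProbabilityMeasure_expMeasure hμ
  rw [← ENNReal.ofReal_toReal (measure_ne_top _ _), ← measureReal_def, ← compl_Iic,
    probReal_compl_eq_one_sub measurableSet_Iic, ← cdf_eq_real, cdf_expMeasure_eq hμ, if_pos hs,
    sub_sub_cancel]

section ExponentialLaw

variable {Ω : Type*} [MeasurableSpace Ω] {P : Measure Ω} {μ : ℝ} {x y : Ω → ℝ}

lemma measure_preimage_Ioi_of_map_eq_expMeasure (hμ : 0 < μ) (hx : Measurable x)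
    (hlaw : P.map x = expMeasure μ) {s : ℝ} (hs : 0 ≤ s) :
    P (x ⁻¹' Ioi s) = ENNReal.ofReal (exp (-(μ * s))) := by
  rw [← Measure.map_apply hx measurableSet_Ioi, hlaw, expMeasure_Ioi hμ hs]

lemma ae_nonneg_of_map_eq_expMeasure (hμ : 0 < μ) (hx : Measurable x)
    (hlaw : P.map x = expMeasure μ) : ∀ᵐ ω ∂P, 0 ≤ x ω := by
  have := isProbabilityMeasure_expMeasure hμ
  have hpos : ∀ᵐ t ∂P.map x, t ∈ Ioi 0 := hlaw ▸
    (mem_ae_iff_prob_eq_one measurableSet_Ioi).2 (by simp [expMeasure_Ioi hμ le_rfl])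
  exact (ae_of_ae_map hx.aemeasurable hpos).mono fun ω hω => hω.le

lemma integrable_and_integral_min_of_map_eq_expMeasure (hμ : 0 < μ) (hx : Measurable x)
    (hlaw : P.map x = expMeasure μ) {Δ : ℝ} (hΔ : 0 ≤ Δ) :
    Integrable (fun ω => min (x ω) Δ) P ∧
      ∫ ω, min (x ω) Δ ∂P = (1 - exp (-(μ * Δ))) / μ := by
  set g : ℝ → ℝ := (Iio Δ).indicator fun t => exp (-(μ * t))
  have hg : IntegrableOn g (Ioi 0) := by
    simpa only [neg_mul] using (exp_neg_integrableOn_Ioi 0 hμ).indicator measurableSet_Iio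
  have htail : ∀ t ∈ Ioi (0 : ℝ), P {ω | t < min (x ω) Δ} = ENNReal.ofReal (g t) := by
    intro t ht
    by_cases htΔ : t < Δ
    · have hset : {ω | t < min (x ω) Δ} = x ⁻¹' Ioi t := by ext ω; simp [htΔ]
      rw [hset, show g t = _ from indicator_of_mem (mem_Iio.2 htΔ) _,
        measure_preimage_Ioi_of_map_eq_expMeasure hμ hx hlaw ht.le]
    · have hset : {ω | t < min (x ω) Δ} = ∅ := by ext ω; simp [htΔ]
      rw [hset, show g t = 0 from indicator_of_notMem (notMem_Iio.2 (not_lt.1 htΔ)) _,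
        measure_empty, ENNReal.ofReal_zero]
  obtain ⟨hint, hE⟩ := integrable_and_integral_eq_of_measure_lt
    (hx.min measurable_const).aemeasurable
    ((ae_nonneg_of_map_eq_expMeasure hμ hx hlaw).mono fun ω hω => le_min hω hΔ) hg
    (fun t _ => indicator_nonneg (fun _ _ => (exp_pos _).le) t) htail
  refine ⟨hint, hE.trans ?_⟩
  rw [setIntegral_indicator measurableSet_Iio, Ioi_inter_Iio, ← integral_Ioc_eq_integral_Ioo,
    ← intervalIntegral.integral_of_le hΔ, integral_exp_neg_mul hμ.ne', mul_zero, neg_zero,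
    exp_zero]

lemma integrable_and_integral_ite_min_sub_of_indepFun (hμ : 0 < μ) (hx : Measurable x)
    (hy : Measurable y) (hxlaw : P.map x = expMeasure μ) (hylaw : P.map y = expMeasure μ)
    (hindep : IndepFun x y P) {Δ : ℝ} (hΔ : 0 ≤ Δ) :
    Integrable (fun ω => if Δ < x ω then min (x ω - Δ) (y ω) else 0) P ∧
      ∫ ω, (if Δ < x ω then min (x ω - Δ) (y ω) else 0) ∂P = exp (-(μ * Δ)) / (2 * μ) := by
  set g : ℝ → ℝ := fun t => exp (-(μ * Δ)) * exp (-(2 * μ) * t)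
  have h2μ : -(2 * μ) < 0 := by linarith
  have hg : IntegrableOn g (Ioi 0) := (integrableOn_exp_mul_Ioi h2μ 0).const_mul _
  have htail : ∀ t ∈ Ioi (0 : ℝ),
      P {ω | t < if Δ < x ω then min (x ω - Δ) (y ω) else 0} = ENNReal.ofReal (g t) := by
    intro t (ht : 0 < t)
    have hset : {ω | t < if Δ < x ω then min (x ω - Δ) (y ω) else 0} =
        x ⁻¹' Ioi (Δ + t) ∩ y ⁻¹' Ioi t := by
      ext ω
      simp only [mem_ofPred_eq, mem_inter_iff, mem_preimage, mem_Ioi]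
      split_ifs with h
      · rw [lt_min_iff, lt_sub_iff_add_lt']
      · constructor
        · intro h'; linarith
        · rintro ⟨h', -⟩; linarith
    rw [hset, hindep.measure_inter_preimage_eq_mul _ _ measurableSet_Ioi measurableSet_Ioi,
      measure_preimage_Ioi_of_map_eq_expMeasure hμ hx hxlaw (by linarith),
      measure_preimage_Ioi_of_map_eq_expMeasure hμ hy hylaw ht.le,
      ← ENNReal.ofReal_mul (exp_pos _).le]
    simp only [g, ← exp_add]
    ring_nf
  have hmeas : Measurable fun ω => if Δ < x ω then min (x ω - Δ) (y ω) else 0 :=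
    Measurable.ite (measurableSet_lt measurable_const hx) ((hx.sub measurable_const).min hy)
      measurable_const
  have hnonneg : ∀ᵐ ω ∂P, 0 ≤ if Δ < x ω then min (x ω - Δ) (y ω) else 0 := by
    filter_upwards [ae_nonneg_of_map_eq_expMeasure hμ hy hylaw] with ω hω
    split_ifs with h
    · exact le_min (by linarith) hω
    · exact le_rfl
  obtain ⟨hint, hE⟩ := integrable_and_integral_eq_of_measure_lt hmeas.aemeasurable hnonneg hg
    (fun t _ => by positivity) htail
  refine ⟨hint, hE.trans ?_⟩
  rw [integral_const_mul, integral_exp_mul_Ioi h2μ, mul_zero, exp_zero]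
  field_simp

end ExponentialLaw

end ProbabilityTheory

theorem deferred_replication_resource_usage_indep_general
    {Ω : Type*} [MeasurableSpace Ω] (P : Measure Ω)
    (μ : ℝ) (hμ : 0 < μ) (Δ : ℝ) (hΔ : 0 ≤ Δ) (lam : ℝ)
    (x y : Ω → ℝ) (hxmeas : Measurable x) (hymeas : Measurable y)
    (hxlaw : Measure.map x P = expMeasure μ)
    (hylaw : Measure.map y P = expMeasure μ)
    (hindep : IndepFun x y P) :
    (∫ ω, min (x ω) (Δ + y ω) ∂P = 1 / μ - exp (-(μ * Δ)) / (2 * μ)) ∧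
      (∫ ω, (if Δ < x ω then min (x ω - Δ) (y ω) else 0) ∂P =
        exp (-(μ * Δ)) / (2 * μ)) ∧
      lam * (∫ ω, min (x ω) (Δ + y ω) ∂P) +
          lam * (∫ ω, (if Δ < x ω then min (x ω - Δ) (y ω) else 0) ∂P) =
        lam / μ := by
  obtain ⟨hint₁, hE₁⟩ := integrable_and_integral_min_of_map_eq_expMeasure hμ hxmeas hxlaw hΔ
  obtain ⟨hint₂, hE₂⟩ :=
    integrable_and_integral_ite_min_sub_of_indepFun hμ hxmeas hymeas hxlaw hylaw hindep hΔ
  have hρ₁ : ∫ ω, min (x ω) (Δ + y ω) ∂P = 1 / μ - exp (-(μ * Δ)) / (2 * μ) := by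
    have hsplit : (fun ω => min (x ω) (Δ + y ω)) =ᵐ[P]
        fun ω => min (x ω) Δ + if Δ < x ω then min (x ω - Δ) (y ω) else 0 :=
      (ae_nonneg_of_map_eq_expMeasure hμ hymeas hylaw).mono fun ω hω => min_add_eq_min_add_ite hω
    rw [integral_congr_ae hsplit, integral_add hint₁ hint₂, hE₁, hE₂]
    field_simp
    ring
  refine ⟨hρ₁, hE₂, ?_⟩
  rw [hρ₁, hE₂]
  field_simp
  ring

/-- **Resource usage under independent replication with a deferred replica.**
Let `x`, `y` be independent exponential(μ) service times of an original job and
of its replica, the replica being started only if the original is still running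
after the replication offset `Δ ≥ 0` (and whichever copy finishes first purges
the other).  Then the expected busy times of the two servers are
(i) `E[min {x, Δ + y}] = 1/μ − e^{−μΔ}/(2μ)` and
(ii) `E[min {x − Δ, y} · 1_{x > Δ}] = e^{−μΔ}/(2μ)`;
hence (iii) for any arrival rate `λ > 0` the total resource usage
`u = ρ₁ + ρ₂` equals `λ/μ`, independently of `Δ`. -/
theorem deferred_replication_resource_usage_indep
    {Ω : Type*} [MeasurableSpace Ω] (P : Measure Ω) [IsProbabilityMeasure P]
    (μ : ℝ) (hμ : 0 < μ) (Δ : ℝ) (hΔ : 0 ≤ Δ) (lam : ℝ) (hlam : 0 < lam)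
    (x y : Ω → ℝ) (hxmeas : Measurable x) (hymeas : Measurable y)
    (hxlaw : Measure.map x P = expMeasure μ)
    (hylaw : Measure.map y P = expMeasure μ)
    (hindep : IndepFun x y P) :
    (∫ ω, min (x ω) (Δ + y ω) ∂P = 1 / μ - exp (-(μ * Δ)) / (2 * μ)) ∧
      (∫ ω, (if Δ < x ω then min (x ω - Δ) (y ω) else 0) ∂P =
        exp (-(μ * Δ)) / (2 * μ)) ∧
      lam * (∫ ω, min (x ω) (Δ + y ω) ∂P) +
          lam * (∫ ω, (if Δ < x ω then min (x ω - Δ) (y ω) else 0) ∂P) =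
        lam / μ :=
  deferred_replication_resource_usage_indep_general P μ hμ Δ hΔ lam x y hxmeas hymeas hxlaw hylaw
    hindep
end
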